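/- arXiv:2111.11782 — 3 statements merged into one kernel-verified Lean document; each statement's English description precedes it below -/
import Mathlib

section
/- Let $X$ be a $p$-convex quasi-Banach lattice with $p \in (0,1)$. Then the $1/p$-convexification $X^{(1/p)}$ admits an equivalent lattice norm; specifically, the functional $|||x||| := \inf\{\sum_{i=1}^n \|x_i\|_{X^{(1/p)}} : |x| \leq \sum_{i=1}^n \oplus |x_i|,\ x_i \in X^{(1/p)}\}$ is a lattice norm on $X^{(1/p)}$ equivalent to the original quasi-norm. -/
open ENNReal

noncomputable section

variable {α : Type*}

/-- A lattice quasi-norm on a lattice of functions on `α` (with possibly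
infinite values), with quasi-triangle constant `C`. -/
def IsLatticeQN (N : (α → ℝ) → ℝ≥0∞) (C : ℝ≥0∞) : Prop :=
  1 ≤ C ∧ C < ∞ ∧ N 0 = 0 ∧
    (∀ (c : ℝ) (f : α → ℝ), N (c • f) = ENNReal.ofReal |c| * N f) ∧
    (∀ f g : α → ℝ, N (f + g) ≤ C * (N f + N g)) ∧
    ∀ f g : α → ℝ, (∀ s, |f s| ≤ |g s|) → N f ≤ N g

/-- `p`-convexity of a quasi-Banach function lattice, with constant `M`. -/
def PConvex (N : (α → ℝ) → ℝ≥0∞) (p : ℝ) (M : ℝ≥0∞) : Prop :=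
  ∀ (n : ℕ) (x : Fin n → α → ℝ),
    N (fun s => (∑ k, |x k s| ^ p) ^ (1 / p)) ≤ M * (∑ k, (N (x k)) ^ p) ^ (1 / p)

/-- The quasi-norm of the `1/p`-convexification `X^{(1/p)}` of `X`:
the same underlying set, quasi-norm `‖x‖^p`, and addition
`x ⊕ y = (x^p + y^p)^{1/p}` (pointwise). -/
def Nconv (N : (α → ℝ) → ℝ≥0∞) (p : ℝ) (f : α → ℝ) : ℝ≥0∞ := N f ^ p

/-- The renorming functional
`|||f||| = inf {∑ ‖xᵢ‖_{X^{(1/p)}} : |f| ≤ ⊕∑ |xᵢ| }` on `X^{(1/p)}`. -/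
def Tnorm (N : (α → ℝ) → ℝ≥0∞) (p : ℝ) (f : α → ℝ) : ℝ≥0∞ :=
  ⨅ (n : ℕ) (x : Fin n → α → ℝ)
    (_ : ∀ s, |f s| ≤ (∑ k, |x k s| ^ p) ^ (1 / p)), ∑ k, Nconv N p (x k)

lemma Tnorm_le (N : (α → ℝ) → ℝ≥0∞) (p : ℝ) (f : α → ℝ) {n : ℕ} (x : Fin n → α → ℝ)
    (h : ∀ s, |f s| ≤ (∑ k, |x k s| ^ p) ^ (1 / p)) :
    Tnorm N p f ≤ ∑ k, Nconv N p (x k) := by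
  refine iInf_le_of_le n ?_
  refine iInf_le_of_le x ?_
  exact iInf_le _ h

lemma Tnorm_zero_le (N : (α → ℝ) → ℝ≥0∞) (p : ℝ) (hp0 : 0 < p) :
    Tnorm N p (0 : α → ℝ) ≤ 0 := by
  have := Tnorm_le N p (0 : α → ℝ) (n := 0) (fun k => 0) ?_
  · simpa using this
  · intro s
    simp only [Pi.zero_apply, abs_zero]
    positivity

lemma abs_rpow_le_of_le {p a A : ℝ} (hp0 : 0 < p) (hA : 0 ≤ A)
    (h : |a| ≤ A ^ (1 / p)) : |a| ^ p ≤ A := by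
  calc |a| ^ p ≤ (A ^ (1 / p)) ^ p := Real.rpow_le_rpow (abs_nonneg _) h hp0.le
  _ = A := by rw [one_div, Real.rpow_inv_rpow hA hp0.ne']

lemma Tnorm_smul_le (N : (α → ℝ) → ℝ≥0∞) (p : ℝ) (hp0 : 0 < p)
    (hh : ∀ (c : ℝ) (f : α → ℝ), N (c • f) = ENNReal.ofReal |c| * N f)
    (c : ℝ) (f : α → ℝ) :
    Tnorm N p (c • f) ≤ ENNReal.ofReal (|c| ^ p) * Tnorm N p f := by
  rcases eq_or_ne c 0 with rfl | hc
  · simpa using (Tnorm_zero_le N p hp0).trans zero_le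
  have hcabs : 0 < |c| := abs_pos.2 hc
  have h0 : ENNReal.ofReal (|c| ^ p) ≠ 0 := by
    simp [ENNReal.ofReal_eq_zero, not_le, Real.rpow_pos_of_pos hcabs]
  simp only [Tnorm, ENNReal.mul_iInf_of_ne h0 ENNReal.ofReal_ne_top]
  refine le_iInf fun n => le_iInf fun x => le_iInf fun hx => ?_
  have key : Tnorm N p (c • f) ≤ ∑ k, Nconv N p (c • x k) := by
    refine Tnorm_le N p (c • f) (fun k => c • x k) fun s => ?_
    have hsum : ∑ k, |(c • x k) s| ^ p = |c| ^ p * ∑ k, |x k s| ^ p := by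
      rw [Finset.mul_sum]
      refine Finset.sum_congr rfl fun k _ => ?_
      simp only [Pi.smul_apply, smul_eq_mul, abs_mul]
      rw [Real.mul_rpow (abs_nonneg _) (abs_nonneg _)]
    have hsnn : 0 ≤ ∑ k, |x k s| ^ p :=
      Finset.sum_nonneg fun k _ => Real.rpow_nonneg (abs_nonneg _) _
    rw [hsum, Real.mul_rpow (Real.rpow_nonneg (abs_nonneg _) _) hsnn,
      one_div, Real.rpow_rpow_inv (abs_nonneg _) hp0.ne']
    calc |(c • f) s| = |c| * |f s| := by simp [abs_mul]
    _ ≤ |c| * (∑ k, |x k s| ^ p) ^ (1 / p) :=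
        mul_le_mul_of_nonneg_left (hx s) (abs_nonneg _)
    _ = |c| * (∑ k, |x k s| ^ p) ^ (p⁻¹) := by rw [one_div]
  refine key.trans (le_of_eq ?_)
  rw [Finset.mul_sum]
  refine Finset.sum_congr rfl fun k _ => ?_
  rw [Nconv, hh, ENNReal.mul_rpow_of_nonneg _ _ hp0.le,
    ENNReal.ofReal_rpow_of_nonneg (abs_nonneg _) hp0.le, Nconv]

/-- Lemma `renorming`: if `X` is a `p`-convex quasi-Banach lattice, `0 < p < 1`,
then `|||·|||` is a lattice norm on the `1/p`-convexification `X^{(1/p)}`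
(monotone, subadditive for the convexified addition `⊕`, homogeneous for the
convexified scalar action) which is equivalent to the original quasi-norm of
`X^{(1/p)}`. -/
theorem renorming (N : (α → ℝ) → ℝ≥0∞) (C M : ℝ≥0∞) (p : ℝ)
    (hp0 : 0 < p) (hp1 : p < 1) (hN : IsLatticeQN N C)
    (hM : 1 ≤ M ∧ M < ∞) (hconv : PConvex N p M) :
    (∀ f g : α → ℝ, (∀ s, |f s| ≤ |g s|) → Tnorm N p f ≤ Tnorm N p g) ∧
    (∀ f g : α → ℝ,
      Tnorm N p (fun s => (|f s| ^ p + |g s| ^ p) ^ (1 / p))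
        ≤ Tnorm N p f + Tnorm N p g) ∧
    (∀ (c : ℝ) (f : α → ℝ),
      Tnorm N p (c • f) = ENNReal.ofReal (|c| ^ p) * Tnorm N p f) ∧
    ∃ c : ℝ≥0∞, 1 ≤ c ∧ c < ∞ ∧ ∀ f : α → ℝ,
      Tnorm N p f ≤ Nconv N p f ∧ Nconv N p f ≤ c * Tnorm N p f := by
  obtain ⟨hC1, hCfin, hN0, hNh, hNtri, hNmono⟩ := hN
  refine ⟨?_, ?_, ?_, ?_⟩
  · -- monotonicity
    intro f g h
    simp only [Tnorm]
    refine le_iInf fun n => le_iInf fun x => le_iInf fun hx => ?_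
    exact Tnorm_le N p f x fun s => (h s).trans (hx s)
  · -- subadditivity for ⊕
    intro f g
    conv_rhs => rw [Tnorm]
    simp only [ENNReal.iInf_add]
    refine le_iInf fun n => le_iInf fun x => le_iInf fun hx => ?_
    conv_rhs => rw [Tnorm]
    simp only [ENNReal.add_iInf]
    refine le_iInf fun m => le_iInf fun y => le_iInf fun hy => ?_
    have key := Tnorm_le N p (fun s => (|f s| ^ p + |g s| ^ p) ^ (1 / p))
      (Fin.append x y) ?_
    · refine key.trans (le_of_eq ?_)
      rw [Fin.sum_univ_add]
      congr 1 <;> refine Finset.sum_congr rfl fun k _ => ?_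
      · rw [Fin.append_left]
      · rw [Fin.append_right]
    · intro s
      have h1 : 0 ≤ |f s| ^ p + |g s| ^ p :=
        add_nonneg (Real.rpow_nonneg (abs_nonneg _) _)
          (Real.rpow_nonneg (abs_nonneg _) _)
      rw [abs_of_nonneg (Real.rpow_nonneg h1 _)]
      refine Real.rpow_le_rpow h1 ?_ (by positivity)
      rw [Fin.sum_univ_add]
      have hfx : |f s| ^ p ≤ ∑ k, |x k s| ^ p :=
        abs_rpow_le_of_le hp0
          (Finset.sum_nonneg fun k _ => Real.rpow_nonneg (abs_nonneg _) _) (hx s)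
      have hgy : |g s| ^ p ≤ ∑ k, |y k s| ^ p :=
        abs_rpow_le_of_le hp0
          (Finset.sum_nonneg fun k _ => Real.rpow_nonneg (abs_nonneg _) _) (hy s)
      calc |f s| ^ p + |g s| ^ p ≤ (∑ k, |x k s| ^ p) + ∑ k, |y k s| ^ p :=
            add_le_add hfx hgy
      _ = (∑ k, |Fin.append x y (Fin.castAdd m k) s| ^ p)
            + ∑ k, |Fin.append x y (Fin.natAdd n k) s| ^ p := by
          congr 1 <;> refine Finset.sum_congr rfl fun k _ => ?_
          · rw [Fin.append_left]
          · rw [Fin.append_right]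
  · -- homogeneity
    intro c f
    rcases eq_or_ne c 0 with rfl | hc
    · have h0 : Tnorm N p ((0 : ℝ) • f) = 0 :=
        le_antisymm (by simpa using Tnorm_zero_le N p hp0) zero_le
      rw [h0, abs_zero, Real.zero_rpow hp0.ne', ENNReal.ofReal_zero, zero_mul]
    · refine le_antisymm (Tnorm_smul_le N p hp0 hNh c f) ?_
      have h2 := Tnorm_smul_le N p hp0 hNh c⁻¹ (c • f)
      have h3 : c⁻¹ • (c • f) = f := by
        rw [smul_smul, inv_mul_cancel₀ hc, one_smul]
      rw [h3] at h2
      calc ENNReal.ofReal (|c| ^ p) * Tnorm N p f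
          ≤ ENNReal.ofReal (|c| ^ p) * (ENNReal.ofReal (|c⁻¹| ^ p) * Tnorm N p (c • f)) :=
            mul_le_mul_right h2 _
      _ = Tnorm N p (c • f) := by
          rw [← mul_assoc, ← ENNReal.ofReal_mul (Real.rpow_nonneg (abs_nonneg _) _),
            ← Real.mul_rpow (abs_nonneg _) (abs_nonneg _), abs_inv,
            mul_inv_cancel₀ (abs_ne_zero.2 hc), Real.one_rpow, ENNReal.ofReal_one, one_mul]
  · -- equivalence
    refine ⟨M ^ p, ?_, ?_, ?_⟩
    · calc (1 : ℝ≥0∞) = 1 ^ p := (ENNReal.one_rpow p).symm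
      _ ≤ M ^ p := ENNReal.rpow_le_rpow hM.1 hp0.le
    · exact ENNReal.rpow_lt_top_of_nonneg hp0.le hM.2.ne
    · intro f
      constructor
      · have := Tnorm_le N p f (n := 1) (fun _ => f) ?_
        · simpa [Nconv] using this
        · intro s
          simp only [Fin.sum_univ_one]
          rw [one_div, Real.rpow_rpow_inv (abs_nonneg _) hp0.ne']
      · have hM0 : M ^ p ≠ 0 := by
          intro h
          have := (ENNReal.one_rpow p) ▸ ENNReal.rpow_le_rpow hM.1 hp0.le
          simp [h] at this
        have hMt : M ^ p ≠ ∞ := ENNReal.rpow_ne_top_of_nonneg hp0.le hM.2.ne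
        rw [Tnorm, ENNReal.mul_iInf_of_ne hM0 hMt]
        refine le_iInf fun n => ?_
        rw [ENNReal.mul_iInf_of_ne hM0 hMt]
        refine le_iInf fun x => ?_
        rw [ENNReal.mul_iInf_of_ne hM0 hMt]
        refine le_iInf fun hx => ?_
        have h1 : N f ≤ N (fun s => (∑ k, |x k s| ^ p) ^ (1 / p)) := by
          refine hNmono _ _ fun s => ?_
          rw [abs_of_nonneg (Real.rpow_nonneg
            (Finset.sum_nonneg fun k _ => Real.rpow_nonneg (abs_nonneg _) _) _)]
          exact hx s
        have h2 := h1.trans (hconv n x)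
        calc Nconv N p f = N f ^ p := rfl
        _ ≤ (M * (∑ k, N (x k) ^ p) ^ (1 / p)) ^ p := ENNReal.rpow_le_rpow h2 hp0.le
        _ = M ^ p * ∑ k, Nconv N p (x k) := by
            rw [ENNReal.mul_rpow_of_nonneg _ _ hp0.le, ← ENNReal.rpow_mul,
              one_div, inv_mul_cancel₀ hp0.ne', ENNReal.rpow_one]
            rfl

end
end

section
/- Let $(X_0, X_1)$ be a quasi-Banach lattice couple such that both $X_0$ and $X_1$ are $p$-convex lattices, $0 < p \leq 1$. Then the sum $X_0 + X_1$ is a $p$-convex quasi-Banach lattice, with $p$-convexity constant at most $2^{2/p - 2} \max_{i=0,1} M^{(p)}(X_i)$. -/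
open ENNReal

noncomputable section

variable {α : Type*}

/-- The quasi-norm of the sum `X₀ + X₁`. -/
def Nsum (N0 N1 : (α → ℝ) → ℝ≥0∞) (f : α → ℝ) : ℝ≥0∞ :=
  ⨅ (g : (α → ℝ) × (α → ℝ)) (_ : f = g.1 + g.2), N0 g.1 + N1 g.2

lemma aux_real_subadd {p : ℝ} (hp0 : 0 < p) (hp1 : p ≤ 1) {a b : ℝ} (ha : 0 ≤ a) (hb : 0 ≤ b) :
    (a + b) ^ p ≤ a ^ p + b ^ p := by
  have key := NNReal.rpow_add_le_add_rpow a.toNNReal b.toNNReal hp0.le hp1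
  have h := NNReal.coe_le_coe.mpr key
  simpa [NNReal.coe_rpow, Real.coe_toNNReal _ ha, Real.coe_toNNReal _ hb,
    Real.coe_toNNReal _ (add_nonneg ha hb)] using h

lemma aux_real_two {q : ℝ} (hq : 1 ≤ q) {a b : ℝ} (ha : 0 ≤ a) (hb : 0 ≤ b) :
    (a + b) ^ q ≤ 2 ^ (q - 1) * (a ^ q + b ^ q) := by
  have key := NNReal.rpow_add_le_mul_rpow_add_rpow a.toNNReal b.toNNReal hq
  have h := NNReal.coe_le_coe.mpr key
  simpa [NNReal.coe_rpow, Real.coe_toNNReal _ ha, Real.coe_toNNReal _ hb,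
    Real.coe_toNNReal _ (add_nonneg ha hb)] using h

lemma aux_enn_superadd {p : ℝ} (hp0 : 0 < p) (hp1 : p ≤ 1) (A B : ℝ≥0∞) :
    A ^ (1 / p) + B ^ (1 / p) ≤ (A + B) ^ (1 / p) := by
  have h1 : (A ^ (1/p) + B ^ (1/p)) ^ p ≤ A + B := by
    have := ENNReal.rpow_add_le_add_rpow (A ^ (1/p)) (B ^ (1/p)) hp0.le hp1
    calc (A ^ (1/p) + B ^ (1/p)) ^ p ≤ (A ^ (1/p)) ^ p + (B ^ (1/p)) ^ p := this
      _ = A + B := by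
        rw [← ENNReal.rpow_mul, ← ENNReal.rpow_mul, one_div_mul_cancel hp0.ne',
          ENNReal.rpow_one, ENNReal.rpow_one]
  calc A ^ (1/p) + B ^ (1/p) = ((A ^ (1/p) + B ^ (1/p)) ^ p) ^ (1/p) := by
        rw [← ENNReal.rpow_mul, mul_one_div_cancel hp0.ne', ENNReal.rpow_one]
    _ ≤ (A + B) ^ (1/p) := ENNReal.rpow_le_rpow h1 (by positivity)

lemma aux_enn_two {p : ℝ} (hp0 : 0 < p) (hp1 : p ≤ 1) (a b : ℝ≥0∞) :
    a ^ p + b ^ p ≤ 2 ^ (1 - p) * (a + b) ^ p := by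
  have hq : 1 ≤ 1 / p := by rw [le_div_iff₀ hp0]; linarith
  have h1 : (a ^ p + b ^ p) ^ (1/p) ≤ 2 ^ (1/p - 1) * (a + b) := by
    have := ENNReal.rpow_add_le_mul_rpow_add_rpow (a ^ p) (b ^ p) hq
    calc (a ^ p + b ^ p) ^ (1/p) ≤ 2 ^ (1/p - 1) * ((a ^ p) ^ (1/p) + (b ^ p) ^ (1/p)) := this
      _ = 2 ^ (1/p - 1) * (a + b) := by
        rw [← ENNReal.rpow_mul, ← ENNReal.rpow_mul, mul_one_div_cancel hp0.ne',
          ENNReal.rpow_one, ENNReal.rpow_one]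
  calc a ^ p + b ^ p = ((a ^ p + b ^ p) ^ (1/p)) ^ p := by
        rw [← ENNReal.rpow_mul, one_div_mul_cancel hp0.ne', ENNReal.rpow_one]
    _ ≤ (2 ^ (1/p - 1) * (a + b)) ^ p := ENNReal.rpow_le_rpow h1 hp0.le
    _ = 2 ^ (1 - p) * (a + b) ^ p := by
        rw [ENNReal.mul_rpow_of_nonneg _ _ hp0.le, ← ENNReal.rpow_mul]
        congr 1
        field_simp

/-- If `(X₀, X₁)` is a `p`-convex quasi-Banach lattice couple, `0 < p ≤ 1`,
then the sum `X₀ + X₁` is `p`-convex with constant at most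
`2^(2/p - 2) * max (M⁽ᵖ⁾(X₀)) (M⁽ᵖ⁾(X₁))`. -/
theorem sum_is_pConvex (N0 N1 : (α → ℝ) → ℝ≥0∞) (C0 C1 M0 M1 : ℝ≥0∞) (p : ℝ)
    (hp0 : 0 < p) (hp1 : p ≤ 1)
    (h0 : IsLatticeQN N0 C0) (h1 : IsLatticeQN N1 C1)
    (hM0 : 1 ≤ M0 ∧ M0 < ∞) (hM1 : 1 ≤ M1 ∧ M1 < ∞)
    (hc0 : PConvex N0 p M0) (hc1 : PConvex N1 p M1) :
    PConvex (Nsum N0 N1) p (ENNReal.ofReal (2 ^ (2 / p - 2)) * max M0 M1) := by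
  obtain ⟨-, -, h0zero, h0smul, -, h0mono⟩ := h0
  obtain ⟨-, -, h1zero, h1smul, -, h1mono⟩ := h1
  have hq : (1:ℝ) ≤ 1 / p := by rw [le_div_iff₀ hp0]; linarith
  intro n x
  set M : ℝ≥0∞ := max M0 M1 with hM
  set t : Fin n → ℝ≥0∞ := fun k => Nsum N0 N1 (x k) with ht
  set K : ℝ≥0∞ := ENNReal.ofReal (2 ^ (2 / p - 2)) * M with hK
  have hK0 : K ≠ 0 := by
    apply mul_ne_zero
    · exact (ENNReal.ofReal_pos.mpr (Real.rpow_pos_of_pos two_pos _)).ne'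
    · exact (lt_of_lt_of_le zero_lt_one (le_trans hM0.1 (le_max_left _ _))).ne'
  have hKtop : K ≠ ∞ := ENNReal.mul_ne_top ENNReal.ofReal_ne_top (max_lt hM0.2 hM1.2).ne
  by_cases htop : ∃ k, t k = ∞
  · obtain ⟨k, hk⟩ := htop
    have hsum : (∑ k, t k ^ p) = ∞ :=
      ENNReal.sum_eq_top.mpr ⟨k, Finset.mem_univ k, by
        rw [hk]; exact ENNReal.top_rpow_of_pos hp0⟩
    rw [hsum, ENNReal.top_rpow_of_pos (by positivity), ENNReal.mul_top hK0]
    exact le_top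
  push_neg at htop
  have main : ∀ ε : ℝ≥0∞, 0 < ε →
      Nsum N0 N1 (fun s => (∑ k, |x k s| ^ p) ^ (1 / p)) ≤ K * (∑ k, (t k + ε) ^ p) ^ (1 / p) := by
    intro ε hε
    have hex : ∀ k, ∃ u v : α → ℝ, x k = u + v ∧ N0 u + N1 v ≤ t k + ε := by
      intro k
      have hlt : (⨅ (gh : (α → ℝ) × (α → ℝ)) (_ : x k = gh.1 + gh.2), N0 gh.1 + N1 gh.2)
          < t k + ε := ENNReal.lt_add_right (htop k) hε.ne'
      simp only [iInf_lt_iff] at hlt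
      obtain ⟨gh, hdec, hlt⟩ := hlt
      exact ⟨gh.1, gh.2, hdec, hlt.le⟩
    choose g h hdec hcost using hex
    set c : ℝ := 2 ^ (1/p - 1) with hcdef
    have hcpos : (0:ℝ) < c := Real.rpow_pos_of_pos two_pos _
    set G : α → ℝ := fun s => (∑ k, |g k s| ^ p) ^ (1/p) with hG
    set Hf : α → ℝ := fun s => (∑ k, |h k s| ^ p) ^ (1/p) with hHf
    set F : α → ℝ := fun s => (∑ k, |x k s| ^ p) ^ (1/p) with hF
    have hFnn : ∀ s, 0 ≤ F s := fun s =>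
      Real.rpow_nonneg (Finset.sum_nonneg fun k _ => Real.rpow_nonneg (abs_nonneg _) _) _
    have hGnn : ∀ s, 0 ≤ G s := fun s =>
      Real.rpow_nonneg (Finset.sum_nonneg fun k _ => Real.rpow_nonneg (abs_nonneg _) _) _
    have hHnn : ∀ s, 0 ≤ Hf s := fun s =>
      Real.rpow_nonneg (Finset.sum_nonneg fun k _ => Real.rpow_nonneg (abs_nonneg _) _) _
    have hFle : ∀ s, F s ≤ c * (G s + Hf s) := by
      intro s
      have hA : (0:ℝ) ≤ ∑ k, |g k s| ^ p :=
        Finset.sum_nonneg fun k _ => Real.rpow_nonneg (abs_nonneg _) _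
      have hB : (0:ℝ) ≤ ∑ k, |h k s| ^ p :=
        Finset.sum_nonneg fun k _ => Real.rpow_nonneg (abs_nonneg _) _
      have h2 : (∑ k, |x k s| ^ p) ≤ (∑ k, |g k s| ^ p) + (∑ k, |h k s| ^ p) := by
        rw [← Finset.sum_add_distrib]
        refine Finset.sum_le_sum fun k _ => ?_
        have hxk : |x k s| ≤ |g k s| + |h k s| := by
          have hxs : x k s = g k s + h k s := by rw [hdec k]; rfl
          rw [hxs]; exact abs_add_le _ _
        calc |x k s| ^ p ≤ (|g k s| + |h k s|) ^ p :=
              Real.rpow_le_rpow (abs_nonneg _) hxk hp0.le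
          _ ≤ |g k s| ^ p + |h k s| ^ p :=
              aux_real_subadd hp0 hp1 (abs_nonneg _) (abs_nonneg _)
      calc F s ≤ ((∑ k, |g k s| ^ p) + (∑ k, |h k s| ^ p)) ^ (1/p) :=
            Real.rpow_le_rpow (Finset.sum_nonneg fun k _ =>
              Real.rpow_nonneg (abs_nonneg _) _) h2 (by positivity)
        _ ≤ 2 ^ (1/p - 1) * ((∑ k, |g k s| ^ p) ^ (1/p) + (∑ k, |h k s| ^ p) ^ (1/p)) :=
            aux_real_two hq hA hB
        _ = c * (G s + Hf s) := rfl
    set G' : α → ℝ := fun s => min (F s) (c * G s) with hG'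
    set H' : α → ℝ := fun s => F s - G' s with hH'
    have hG'nn : ∀ s, 0 ≤ G' s := fun s => le_min (hFnn s) (mul_nonneg hcpos.le (hGnn s))
    have hG'le : ∀ s, G' s ≤ c * G s := fun s => min_le_right _ _
    have hH'nn : ∀ s, 0 ≤ H' s := fun s => sub_nonneg.2 (min_le_left _ _)
    have hH'le : ∀ s, H' s ≤ c * Hf s := by
      intro s
      have h3 := hFle s
      rw [mul_add] at h3
      rcases le_total (F s) (c * G s) with hcase | hcase
      · have : G' s = F s := min_eq_left hcase
        rw [hH'] ; simp only [this]
        have := mul_nonneg hcpos.le (hHnn s)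
        linarith
      · have hmin : G' s = c * G s := min_eq_right hcase
        rw [hH'] ; simp only [hmin]
        linarith
    have hstep1 : Nsum N0 N1 F ≤ N0 G' + N1 H' := by
      have hFd : F = G' + H' := by
        funext s
        rw [Pi.add_apply, hH']
        ring
      exact iInf₂_le (G', H') hFd
    have hNG' : N0 G' ≤ ENNReal.ofReal c * N0 G := by
      calc N0 G' ≤ N0 (c • G) := by
            refine h0mono _ _ fun s => ?_
            rw [Pi.smul_apply, smul_eq_mul, abs_of_nonneg (hG'nn s),
              abs_of_nonneg (mul_nonneg hcpos.le (hGnn s))]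
            exact hG'le s
        _ = ENNReal.ofReal |c| * N0 G := h0smul c G
        _ = ENNReal.ofReal c * N0 G := by rw [abs_of_pos hcpos]
    have hNH' : N1 H' ≤ ENNReal.ofReal c * N1 Hf := by
      calc N1 H' ≤ N1 (c • Hf) := by
            refine h1mono _ _ fun s => ?_
            rw [Pi.smul_apply, smul_eq_mul, abs_of_nonneg (hH'nn s),
              abs_of_nonneg (mul_nonneg hcpos.le (hHnn s))]
            exact hH'le s
        _ = ENNReal.ofReal |c| * N1 Hf := h1smul c Hf
        _ = ENNReal.ofReal c * N1 Hf := by rw [abs_of_pos hcpos]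
    have hNG : N0 G ≤ M0 * (∑ k, N0 (g k) ^ p) ^ (1/p) := hc0 n g
    have hNH : N1 Hf ≤ M1 * (∑ k, N1 (h k) ^ p) ^ (1/p) := hc1 n h
    have hAB : (∑ k, N0 (g k) ^ p) + (∑ k, N1 (h k) ^ p)
        ≤ 2 ^ (1 - p) * ∑ k, (t k + ε) ^ p := by
      rw [← Finset.sum_add_distrib, Finset.mul_sum]
      refine Finset.sum_le_sum fun k _ => ?_
      calc N0 (g k) ^ p + N1 (h k) ^ p
          ≤ 2 ^ (1 - p) * (N0 (g k) + N1 (h k)) ^ p := aux_enn_two hp0 hp1 _ _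
        _ ≤ 2 ^ (1 - p) * (t k + ε) ^ p :=
            mul_le_mul_right (ENNReal.rpow_le_rpow (hcost k) hp0.le) _
    calc Nsum N0 N1 F ≤ N0 G' + N1 H' := hstep1
      _ ≤ ENNReal.ofReal c * N0 G + ENNReal.ofReal c * N1 Hf := add_le_add hNG' hNH'
      _ = ENNReal.ofReal c * (N0 G + N1 Hf) := (mul_add _ _ _).symm
      _ ≤ ENNReal.ofReal c * (M0 * (∑ k, N0 (g k) ^ p) ^ (1/p)
            + M1 * (∑ k, N1 (h k) ^ p) ^ (1/p)) := mul_le_mul_right (add_le_add hNG hNH) _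
      _ ≤ ENNReal.ofReal c * (M * (∑ k, N0 (g k) ^ p) ^ (1/p)
            + M * (∑ k, N1 (h k) ^ p) ^ (1/p)) := by
            refine mul_le_mul_right (add_le_add ?_ ?_) _
            · exact mul_le_mul_left (le_max_left _ _) _
            · exact mul_le_mul_left (le_max_right _ _) _
      _ = ENNReal.ofReal c * M * ((∑ k, N0 (g k) ^ p) ^ (1/p)
            + (∑ k, N1 (h k) ^ p) ^ (1/p)) := by ring
      _ ≤ ENNReal.ofReal c * M * ((∑ k, N0 (g k) ^ p) + (∑ k, N1 (h k) ^ p)) ^ (1/p) :=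
            mul_le_mul_right (aux_enn_superadd hp0 hp1 _ _) _
      _ ≤ ENNReal.ofReal c * M * (2 ^ (1 - p) * ∑ k, (t k + ε) ^ p) ^ (1/p) :=
            mul_le_mul_right (ENNReal.rpow_le_rpow hAB (by positivity)) _
      _ = K * (∑ k, (t k + ε) ^ p) ^ (1/p) := by
            rw [ENNReal.mul_rpow_of_nonneg _ _ (by positivity : (0:ℝ) ≤ 1/p),
              ← ENNReal.rpow_mul]
            have hconst : ENNReal.ofReal c * (2:ℝ≥0∞) ^ ((1 - p) * (1/p))
                = ENNReal.ofReal (2 ^ (2/p - 2)) := by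
              have h2 : (2:ℝ≥0∞) = ENNReal.ofReal 2 := by simp
              rw [h2, ENNReal.ofReal_rpow_of_pos two_pos,
                ← ENNReal.ofReal_mul (le_of_lt hcpos), hcdef, ← Real.rpow_add two_pos]
              congr 1
              field_simp
              ring
            calc ENNReal.ofReal c * M * ((2:ℝ≥0∞) ^ ((1 - p) * (1/p))
                  * (∑ k, (t k + ε) ^ p) ^ (1/p))
                = (ENNReal.ofReal c * (2:ℝ≥0∞) ^ ((1 - p) * (1/p))) * M
                  * (∑ k, (t k + ε) ^ p) ^ (1/p) := by ring
              _ = K * (∑ k, (t k + ε) ^ p) ^ (1/p) := by rw [hconst, hK]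
  have hT : Filter.Tendsto (fun ε : ℝ≥0∞ => K * (∑ k, (t k + ε) ^ p) ^ (1/p))
      (nhdsWithin 0 (Set.Ioi 0)) (nhds (K * (∑ k, t k ^ p) ^ (1/p))) := by
    apply Filter.Tendsto.mono_left _ nhdsWithin_le_nhds
    apply ENNReal.Tendsto.const_mul _ (Or.inr hKtop)
    apply (ENNReal.continuous_rpow_const.tendsto _).comp
    apply tendsto_finset_sum
    intro k _
    apply (ENNReal.continuous_rpow_const.tendsto _).comp
    simpa using (tendsto_const_nhds.add (Filter.tendsto_id : Filter.Tendsto id (nhds (0:ℝ≥0∞)) _))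
  refine ge_of_tendsto hT ?_
  filter_upwards [self_mem_nhdsWithin] with ε hε
  exact main ε hε


end
end

section
/- Let $0 < p \leq 1$ and let $(X_0, X_1)$ be a $p$-convex quasi-Banach lattice couple. Then the sum of the $1/p$-convexifications satisfies $X_0^{(1/p)} + X_1^{(1/p)} = (X_0 + X_1)^{(1/p)}$ as sets, and for every $x$ in this space and all $t > 0$: $K(t, x; X_0^{(1/p)}, X_1^{(1/p)}) \leq 2^{1-p} K(t^{1/p}, x; X_0, X_1)^p$ and $K(t, x; X_0^{(1/p)}, X_1^{(1/p)}) \geq 2^{2p-2} \min_{i=0,1}(M^{(p)}(X_i))^{-p} K(t^{1/p}, x; X_0, X_1)^p$. -/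
/-!
Everything happens pointwise. If `f = f₀ + f₁`, rescaling `(|f₀|, |f₁|)` by the factor
`|f| / (|f₀|^p + |f₁|^p)^{1/p} ≤ 1` gives `g ≤ |f₀|`, `h ≤ |f₁|` with `|f| = (g^p + h^p)^{1/p}`.
Conversely, if `|f| = (g^p + h^p)^{1/p} ≤ 2^{1/p-1} (g + h)`, splitting `f` in the ratio `g : h`
gives summands dominated by `2^{1/p-1} g` and `2^{1/p-1} h`. Lattice monotonicity turns these
pointwise bounds into bounds on the quasi-norms, and the constants come from
`(a + b)^p ≤ a^p + b^p ≤ 2^{1-p} (a + b)^p` for `0 < p ≤ 1`.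
-/

open ENNReal

noncomputable section

variable {α : Type*}

/-- The Peetre K-functional of the couple `(X₀, X₁)`. -/
def Kfun (N0 N1 : (α → ℝ) → ℝ≥0∞) (t : ℝ) (x : α → ℝ) : ℝ≥0∞ :=
  ⨅ (y : (α → ℝ) × (α → ℝ)) (_ : x = y.1 + y.2), N0 y.1 + ENNReal.ofReal t * N1 y.2

/-- The K-functional of the couple of `1/p`-convexifications
`(X₀^{(1/p)}, X₁^{(1/p)})`: the quasi-norm of `X^{(1/p)}` is `‖·‖^p` and the
addition is `x ⊕ y = (x^p + y^p)^{1/p}` (pointwise, over nonnegative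
decompositions). -/
def Kconv (N0 N1 : (α → ℝ) → ℝ≥0∞) (p t : ℝ) (f : α → ℝ) : ℝ≥0∞ :=
  ⨅ (g : (α → ℝ) × (α → ℝ))
    (_ : ∀ s, 0 ≤ g.1 s ∧ 0 ≤ g.2 s ∧ |f s| = (g.1 s ^ p + g.2 s ^ p) ^ (1 / p)),
    N0 g.1 ^ p + ENNReal.ofReal t * N1 g.2 ^ p

namespace Real

lemma rpow_add_rpow_le_two_rpow_mul_add {p a b : ℝ} (ha : 0 ≤ a) (hb : 0 ≤ b) (hp0 : 0 < p)
    (hp1 : p ≤ 1) : (a ^ p + b ^ p) ^ (1 / p) ≤ 2 ^ (1 / p - 1) * (a + b) := by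
  lift a to NNReal using ha
  lift b to NNReal using hb
  have h := NNReal.rpow_add_le_mul_rpow_add_rpow (a ^ p) (b ^ p) (one_le_one_div hp0 hp1)
  rw [← NNReal.rpow_mul, ← NNReal.rpow_mul, mul_one_div_cancel hp0.ne', NNReal.rpow_one,
    NNReal.rpow_one] at h
  exact_mod_cast h

lemma mul_rpow_add_rpow_rpow_one_div {p c a b : ℝ} (hc : 0 ≤ c) (ha : 0 ≤ a) (hb : 0 ≤ b)
    (hp : 0 < p) : ((c * a) ^ p + (c * b) ^ p) ^ (1 / p) = c * (a ^ p + b ^ p) ^ (1 / p) := by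
  rw [mul_rpow hc ha, mul_rpow hc hb, ← mul_add, mul_rpow (by positivity) (by positivity),
    ← rpow_mul hc, mul_one_div_cancel hp.ne', rpow_one]

end Real

lemma exists_rpow_add_rpow_eq_of_le {p r a b : ℝ} (hp : 0 < p) (hr : 0 ≤ r) (ha : 0 ≤ a)
    (hb : 0 ≤ b) (h : r ≤ (a ^ p + b ^ p) ^ (1 / p)) :
    ∃ u v : ℝ, 0 ≤ u ∧ 0 ≤ v ∧ r = (u ^ p + v ^ p) ^ (1 / p) ∧ u ≤ a ∧ v ≤ b := by
  set D := (a ^ p + b ^ p) ^ (1 / p)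
  have hq0 : 0 ≤ r / D := div_nonneg hr (hr.trans h)
  have hq1 : r / D ≤ 1 := div_le_one_of_le₀ h (hr.trans h)
  refine ⟨r / D * a, r / D * b, by positivity, by positivity, ?_,
    mul_le_of_le_one_left ha hq1, mul_le_of_le_one_left hb hq1⟩
  -- if `D = 0` then `r = 0`, and the junk value `r / 0 = 0` still works
  rw [Real.mul_rpow_add_rpow_rpow_one_div hq0 ha hb hp,
    div_mul_cancel_of_imp fun hD => le_antisymm (hD ▸ h) hr]

lemma exists_add_eq_of_abs_le_mul_add {x c u v : ℝ} (hu : 0 ≤ u) (hv : 0 ≤ v)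
    (h : |x| ≤ c * (u + v)) : ∃ y z : ℝ, x = y + z ∧ |y| ≤ c * u ∧ |z| ≤ c * v := by
  rcases (add_nonneg hu hv).eq_or_lt with huv | huv
  · obtain ⟨rfl, rfl⟩ : u = 0 ∧ v = 0 := ⟨by linarith, by linarith⟩
    refine ⟨0, 0, ?_, by simp, by simp⟩
    simpa [← huv] using h
  · have hc0 : 0 ≤ c := by nlinarith [abs_nonneg x]
    have hc : |x| / (u + v) ≤ c := div_le_of_le_mul₀ huv.le hc0 h
    refine ⟨x / (u + v) * u, x / (u + v) * v, by field_simp, ?_, ?_⟩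
    · rw [abs_mul, abs_div, abs_of_pos huv, abs_of_nonneg hu]
      gcongr
    · rw [abs_mul, abs_div, abs_of_pos huv, abs_of_nonneg hv]
      gcongr

section Decomposition

variable {p : ℝ}

lemma exists_rpow_decomp_of_eq_add (hp0 : 0 < p) (hp1 : p ≤ 1) {f f0 f1 : α → ℝ}
    (hf : f = f0 + f1) :
    ∃ g h : α → ℝ, (∀ s, 0 ≤ g s ∧ 0 ≤ h s ∧ |f s| = (g s ^ p + h s ^ p) ^ (1 / p)) ∧
      (∀ s, |g s| ≤ |f0 s|) ∧ ∀ s, |h s| ≤ |f1 s| := by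
  have hle : ∀ s, |f s| ≤ (|f0 s| ^ p + |f1 s| ^ p) ^ (1 / p) := fun s => calc
    |f s| ≤ |f0 s| + |f1 s| := hf ▸ abs_add_le _ _
    _ = (|f0 s| ^ (1 : ℝ) + |f1 s| ^ (1 : ℝ)) ^ (1 / (1 : ℝ)) := by simp
    _ ≤ _ := Real.rpow_add_rpow_le (abs_nonneg _) (abs_nonneg _) hp0 hp1
  choose g h hg hh hf_eq hg_le hh_le using fun s =>
    exists_rpow_add_rpow_eq_of_le hp0 (abs_nonneg (f s)) (abs_nonneg _) (abs_nonneg _) (hle s)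
  exact ⟨g, h, fun s => ⟨hg s, hh s, hf_eq s⟩, fun s => (abs_of_nonneg (hg s)).trans_le (hg_le s),
    fun s => (abs_of_nonneg (hh s)).trans_le (hh_le s)⟩

lemma exists_eq_add_of_rpow_decomp (hp0 : 0 < p) (hp1 : p ≤ 1) {f g h : α → ℝ}
    (hgh : ∀ s, 0 ≤ g s ∧ 0 ≤ h s ∧ |f s| = (g s ^ p + h s ^ p) ^ (1 / p)) :
    ∃ f0 f1 : α → ℝ, f = f0 + f1 ∧
      (∀ s, |f0 s| ≤ 2 ^ (1 / p - 1) * g s) ∧ ∀ s, |f1 s| ≤ 2 ^ (1 / p - 1) * h s := by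
  have hle : ∀ s, |f s| ≤ 2 ^ (1 / p - 1) * (g s + h s) := fun s => by
    obtain ⟨hg, hh, hf⟩ := hgh s
    exact hf ▸ Real.rpow_add_rpow_le_two_rpow_mul_add hg hh hp0 hp1
  choose f0 f1 hf hf0 hf1 using fun s =>
    exists_add_eq_of_abs_le_mul_add (hgh s).1 (hgh s).2.1 (hle s)
  exact ⟨f0, f1, funext hf, hf0, hf1⟩

end Decomposition

namespace IsLatticeQN

variable {N : (α → ℝ) → ℝ≥0∞} {C : ℝ≥0∞}

lemma mono (hN : IsLatticeQN N C) {u v : α → ℝ} (h : ∀ s, |u s| ≤ |v s|) : N u ≤ N v :=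
  hN.2.2.2.2.2 u v h

lemma le_ofReal_mul (hN : IsLatticeQN N C) {u v : α → ℝ} {c : ℝ} (hc : 0 ≤ c)
    (h : ∀ s, |u s| ≤ c * v s) : N u ≤ ENNReal.ofReal c * N v := calc
  N u ≤ N (c • v) := hN.mono fun s => by
      simpa only [Pi.smul_apply, smul_eq_mul, abs_mul, abs_of_nonneg hc] using
        (h s).trans (by gcongr; exact le_abs_self _)
  _ = ENNReal.ofReal c * N v := by rw [hN.2.2.2.1, abs_of_nonneg hc]

end IsLatticeQN

namespace ENNReal

lemma add_rpow_le_two_rpow_mul_rpow_add (a b : ℝ≥0∞) {p : ℝ} (hp0 : 0 < p) (hp1 : p ≤ 1) :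
    a ^ p + b ^ p ≤ 2 ^ (1 - p) * (a + b) ^ p := by
  have h := rpow_add_le_mul_rpow_add_rpow (a ^ p) (b ^ p) (one_le_one_div hp0 hp1)
  rw [← rpow_mul, ← rpow_mul, mul_one_div_cancel hp0.ne', rpow_one, rpow_one] at h
  calc a ^ p + b ^ p = ((a ^ p + b ^ p) ^ (1 / p)) ^ p := by
        rw [← rpow_mul, one_div_mul_cancel hp0.ne', rpow_one]
    _ ≤ (2 ^ (1 / p - 1) * (a + b)) ^ p := by gcongr
    _ = 2 ^ (1 - p) * (a + b) ^ p := by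
        rw [mul_rpow_of_nonneg _ _ hp0.le, ← rpow_mul, sub_mul, one_div_mul_cancel hp0.ne',
          one_mul]

lemma mul_iInf_rpow {ι : Sort*} (f : ι → ℝ≥0∞) {c : ℝ≥0∞} (hc0 : c ≠ 0) (hc : c ≠ ∞) {p : ℝ}
    (hp : 0 < p) : c * (⨅ i, f i) ^ p = ⨅ i, c * f i ^ p := by
  rw [← mul_iInf_of_ne hc0 hc]
  congr 1
  exact (orderIsoRpow p hp).map_iInf f

lemma ofReal_rpow_one_div_rpow {t p : ℝ} (ht : 0 ≤ t) (hp : 0 < p) :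
    ENNReal.ofReal (t ^ (1 / p)) ^ p = ENNReal.ofReal t := by
  rw [ofReal_rpow_of_nonneg (Real.rpow_nonneg ht _) hp.le, ← Real.rpow_mul ht,
    one_div_mul_cancel hp.ne', Real.rpow_one]

lemma ofReal_two_rpow (x : ℝ) : ENNReal.ofReal (2 ^ x) = 2 ^ x := by
  rw [← ofReal_rpow_of_pos two_pos, ofReal_ofNat]

end ENNReal

section KFunctional

variable {N0 N1 : (α → ℝ) → ℝ≥0∞} {C0 C1 : ℝ≥0∞} {p t : ℝ}

lemma Kconv_le_two_rpow_mul_Kfun_rpow (hp0 : 0 < p) (hp1 : p ≤ 1) (h0 : IsLatticeQN N0 C0)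
    (h1 : IsLatticeQN N1 C1) (ht : 0 ≤ t) (f : α → ℝ) :
    Kconv N0 N1 p t f ≤ 2 ^ (1 - p) * Kfun N0 N1 (t ^ (1 / p)) f ^ p := by
  rw [Kfun]
  simp only [ENNReal.mul_iInf_rpow _ (ENNReal.rpow_pos two_pos ENNReal.ofNat_ne_top).ne'
    (ENNReal.rpow_ne_top_of_ne_zero two_ne_zero ENNReal.ofNat_ne_top) hp0]
  refine le_iInf₂ fun y hy => ?_
  obtain ⟨g, h, hgh, hg, hh⟩ := exists_rpow_decomp_of_eq_add hp0 hp1 hy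
  calc Kconv N0 N1 p t f ≤ N0 g ^ p + ENNReal.ofReal t * N1 h ^ p := iInf₂_le (g, h) hgh
    _ ≤ N0 y.1 ^ p + ENNReal.ofReal t * N1 y.2 ^ p := by
        gcongr
        exacts [h0.mono hg, h1.mono hh]
    _ = N0 y.1 ^ p + (ENNReal.ofReal (t ^ (1 / p)) * N1 y.2) ^ p := by
        rw [ENNReal.mul_rpow_of_nonneg _ _ hp0.le, ENNReal.ofReal_rpow_one_div_rpow ht hp0]
    _ ≤ _ := ENNReal.add_rpow_le_two_rpow_mul_rpow_add _ _ hp0 hp1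

lemma two_rpow_mul_Kfun_rpow_le_Kconv (hp0 : 0 < p) (hp1 : p ≤ 1) (h0 : IsLatticeQN N0 C0)
    (h1 : IsLatticeQN N1 C1) (ht : 0 ≤ t) (f : α → ℝ) :
    2 ^ (p - 1) * Kfun N0 N1 (t ^ (1 / p)) f ^ p ≤ Kconv N0 N1 p t f := by
  refine le_iInf₂ fun gh hgh => ?_
  obtain ⟨f0, f1, hf, hf0, hf1⟩ := exists_eq_add_of_rpow_decomp hp0 hp1 hgh
  set T := ENNReal.ofReal (t ^ (1 / p))
  have hK : Kfun N0 N1 (t ^ (1 / p)) f ≤ 2 ^ (1 / p - 1) * (N0 gh.1 + T * N1 gh.2) := calc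
    Kfun N0 N1 (t ^ (1 / p)) f ≤ N0 f0 + T * N1 f1 := iInf₂_le (f0, f1) hf
    _ ≤ ENNReal.ofReal (2 ^ (1 / p - 1)) * N0 gh.1 +
        T * (ENNReal.ofReal (2 ^ (1 / p - 1)) * N1 gh.2) := by
      gcongr
      exacts [h0.le_ofReal_mul (by positivity) hf0, h1.le_ofReal_mul (by positivity) hf1]
    _ = 2 ^ (1 / p - 1) * (N0 gh.1 + T * N1 gh.2) := by
      rw [ENNReal.ofReal_two_rpow]
      ring
  have hconst : (2 : ℝ≥0∞) ^ (p - 1) * (2 ^ (1 / p - 1)) ^ p = 1 := by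
    rw [← ENNReal.rpow_mul, ← ENNReal.rpow_add _ _ two_ne_zero ENNReal.ofNat_ne_top, sub_mul,
      one_div_mul_cancel hp0.ne', one_mul, show p - 1 + (1 - p) = 0 by ring, ENNReal.rpow_zero]
  calc 2 ^ (p - 1) * Kfun N0 N1 (t ^ (1 / p)) f ^ p
      ≤ 2 ^ (p - 1) * (2 ^ (1 / p - 1) * (N0 gh.1 + T * N1 gh.2)) ^ p := by gcongr
    _ = (N0 gh.1 + T * N1 gh.2) ^ p := by
      rw [ENNReal.mul_rpow_of_nonneg _ _ hp0.le, ← mul_assoc, hconst, one_mul]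
    _ ≤ N0 gh.1 ^ p + (T * N1 gh.2) ^ p := ENNReal.rpow_add_le_add_rpow _ _ hp0.le hp1
    _ = N0 gh.1 ^ p + ENNReal.ofReal t * N1 gh.2 ^ p := by
      rw [ENNReal.mul_rpow_of_nonneg _ _ hp0.le, ENNReal.ofReal_rpow_one_div_rpow ht hp0]

end KFunctional

theorem K_functional_convexification_general (N0 N1 : (α → ℝ) → ℝ≥0∞)
    (C0 C1 M0 M1 : ℝ≥0∞) (p : ℝ) (hp0 : 0 < p) (hp1 : p ≤ 1)
    (h0 : IsLatticeQN N0 C0) (h1 : IsLatticeQN N1 C1)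
    (hM0 : 1 ≤ M0 ∧ M0 < ∞) :
    ({f : α → ℝ | ∃ g h : α → ℝ,
        (∀ s, 0 ≤ g s ∧ 0 ≤ h s ∧ |f s| = (g s ^ p + h s ^ p) ^ (1 / p)) ∧
        N0 g < ∞ ∧ N1 h < ∞} =
      {f : α → ℝ | ∃ g h : α → ℝ, f = g + h ∧ N0 g < ∞ ∧ N1 h < ∞}) ∧
    ∀ (f : α → ℝ) (t : ℝ), 0 < t →
      (Kconv N0 N1 p t f ≤
        ENNReal.ofReal (2 ^ (1 - p)) * Kfun N0 N1 (t ^ (1 / p)) f ^ p ∧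
      ENNReal.ofReal (2 ^ (2 * p - 2)) * min (M0 ^ p)⁻¹ (M1 ^ p)⁻¹ *
          Kfun N0 N1 (t ^ (1 / p)) f ^ p ≤ Kconv N0 N1 p t f) := by
  refine ⟨Set.ext fun f => ⟨?_, ?_⟩, fun f t ht => ⟨?_, ?_⟩⟩
  · rintro ⟨g, h, hgh, hg, hh⟩
    obtain ⟨f0, f1, hf, hf0, hf1⟩ := exists_eq_add_of_rpow_decomp hp0 hp1 hgh
    exact ⟨f0, f1, hf,
      (h0.le_ofReal_mul (by positivity) hf0).trans_lt (mul_lt_top ofReal_lt_top hg),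
      (h1.le_ofReal_mul (by positivity) hf1).trans_lt (mul_lt_top ofReal_lt_top hh)⟩
  · rintro ⟨f0, f1, hf, hf0, hf1⟩
    obtain ⟨g, h, hgh, hg, hh⟩ := exists_rpow_decomp_of_eq_add hp0 hp1 hf
    exact ⟨g, h, hgh, (h0.mono hg).trans_lt hf0, (h1.mono hh).trans_lt hf1⟩
  · rw [ofReal_two_rpow]
    exact Kconv_le_two_rpow_mul_Kfun_rpow hp0 hp1 h0 h1 ht.le f
  · have hmin : min (M0 ^ p)⁻¹ (M1 ^ p)⁻¹ ≤ 1 :=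
      (min_le_left _ _).trans (ENNReal.inv_le_one.2 (one_le_rpow hM0.1 hp0))
    calc ENNReal.ofReal (2 ^ (2 * p - 2)) * min (M0 ^ p)⁻¹ (M1 ^ p)⁻¹ *
          Kfun N0 N1 (t ^ (1 / p)) f ^ p
        ≤ 2 ^ (p - 1) * 1 * Kfun N0 N1 (t ^ (1 / p)) f ^ p := by
          rw [ofReal_two_rpow]
          gcongr ?_ * ?_ * _
          exact rpow_le_rpow_of_exponent_le one_le_two (by linarith)
      _ ≤ Kconv N0 N1 p t f := by
          rw [mul_one]
          exact two_rpow_mul_Kfun_rpow_le_Kconv hp0 hp1 h0 h1 ht.le f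

/-- K-functional estimates for `1/p`-convexifications: for a `p`-convex
quasi-Banach lattice couple, `0 < p ≤ 1`, one has
`Σ(X₀^{(1/p)}, X₁^{(1/p)}) = Σ(X₀, X₁)^{(1/p)}` as sets, and for all `t > 0`
`2^{2p-2} minᵢ (M⁽ᵖ⁾(Xᵢ))^{-p} · K(t^{1/p}, x; X₀, X₁)^p
  ≤ K(t, x; X₀^{(1/p)}, X₁^{(1/p)}) ≤ 2^{1-p} · K(t^{1/p}, x; X₀, X₁)^p`. -/
theorem K_functional_convexification (N0 N1 : (α → ℝ) → ℝ≥0∞)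
    (C0 C1 M0 M1 : ℝ≥0∞) (p : ℝ) (hp0 : 0 < p) (hp1 : p ≤ 1)
    (h0 : IsLatticeQN N0 C0) (h1 : IsLatticeQN N1 C1)
    (hM0 : 1 ≤ M0 ∧ M0 < ∞) (hM1 : 1 ≤ M1 ∧ M1 < ∞)
    (hc0 : PConvex N0 p M0) (hc1 : PConvex N1 p M1) :
    ({f : α → ℝ | ∃ g h : α → ℝ,
        (∀ s, 0 ≤ g s ∧ 0 ≤ h s ∧ |f s| = (g s ^ p + h s ^ p) ^ (1 / p)) ∧
        N0 g < ∞ ∧ N1 h < ∞} =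
      {f : α → ℝ | ∃ g h : α → ℝ, f = g + h ∧ N0 g < ∞ ∧ N1 h < ∞}) ∧
    ∀ (f : α → ℝ) (t : ℝ), 0 < t →
      (Kconv N0 N1 p t f ≤
        ENNReal.ofReal (2 ^ (1 - p)) * Kfun N0 N1 (t ^ (1 / p)) f ^ p ∧
      ENNReal.ofReal (2 ^ (2 * p - 2)) * min (M0 ^ p)⁻¹ (M1 ^ p)⁻¹ *
          Kfun N0 N1 (t ^ (1 / p)) f ^ p ≤ Kconv N0 N1 p t f) :=
  K_functional_convexification_general N0 N1 C0 C1 M0 M1 p hp0 hp1 h0 h1 hM0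

end
end
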